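/- arXiv:2511.18800 — 2 statements merged into one kernel-verified Lean document; each statement's English description precedes it below -/
import Mathlib

section
/- Let X(t) = (Q(t),P(t)) and X_d(t) = (Q_d(t),P_d(t)) be trajectories of the extended Lie-Poisson system Q̇ = QV, Ṗ = ad*_V P + τ with inputs (V,τ) and (V_d,τ_d) respectively. Then the right-invariant error E = X X_d⁻¹ = (QQ_d⁻¹, Ad*_{Q_d⁻¹}(P − P_d)) satisfies the extended Lie-Poisson equations Q̇_E = Q_E V_E, Ṗ_E = ad*_{V_E} P_E + τ_E, where (V_E, τ_E) = Ad_{X_d}(V − V_d, τ − τ_d) is the adjoint on the semidirect group G ⋉ g*. -/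
/-!
STATEMENT 7: Let X(t) = (Q(t),P(t)) and X_d(t) = (Q_d(t),P_d(t)) be
trajectories of the extended Lie-Poisson system Q̇ = QV, Ṗ = ad*_V P + τ
with inputs (V,τ) and (V_d,τ_d).  Then the right-invariant error
E = X X_d⁻¹ = (QQ_d⁻¹, Ad*_{Q_d⁻¹}(P − P_d)) satisfies the extended
Lie-Poisson equations Q̇_E = Q_E V_E, Ṗ_E = ad*_{V_E} P_E + τ_E, where
(V_E, τ_E) = Ad_{X_d}(V − V_d, τ − τ_d)
           = (Ad_{Q_d}(V − V_d), Ad*_{Q_d⁻¹}(ad*_{V−V_d} P_d + (τ − τ_d)))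
is the adjoint on the semidirect group G ⋉ g*.
G is the group of invertible n×n real matrices, g ≅ g* ≅ n×n matrices via
the trace pairing; Ad_Q V = Q V Q⁻¹, Ad*_Q P = Qᵀ P (Q⁻¹)ᵀ,
ad*_V P = Vᵀ P − P Vᵀ.
-/

open Matrix

noncomputable section

attribute [local instance]
  Matrix.linftyOpNormedAddCommGroup Matrix.linftyOpNormedSpace
  Matrix.linftyOpNormedRing Matrix.linftyOpNormedAlgebra

variable {n : ℕ}

/-- `ad*_V P = Vᵀ P − P Vᵀ`. -/
def coad (V P : Matrix (Fin n) (Fin n) ℝ) : Matrix (Fin n) (Fin n) ℝ :=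
  Vᵀ * P - P * Vᵀ

/-!
Both components follow from the Leibniz rule once one knows that `Q̇ = Q V` forces
`d(Q⁻¹)/dt = -V Q⁻¹`. For the momentum, transporting a curve `D` by `Ad*_{Q_d⁻¹}` turns its
derivative into `Ad*_{Q_d⁻¹}(Ḋ - ad*_{V_d} D)`; with `D = P - P_d` this is
`Ad*_{Q_d⁻¹}(ad*_{V - V_d} (P - P_d)) + τ_E`, and the `Ad`-equivariance
`ad*_{Ad_g W} (Ad*_{g⁻¹} X) = Ad*_{g⁻¹} (ad*_W X)` rewrites the first term as `ad*_{V_E} P_E`.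
-/

section MatrixCalculus

variable {𝕜 m : Type*} [RCLike 𝕜] [Fintype m] [DecidableEq m]
  {A B : 𝕜 → Matrix m m 𝕜} {A' U V : Matrix m m 𝕜} {t : 𝕜}

omit [DecidableEq m] in
theorem HasDerivAt.matrix_transpose (h : HasDerivAt A A' t) :
    HasDerivAt (fun s => (A s)ᵀ) A'ᵀ t :=
  (transposeLinearEquiv m m 𝕜 𝕜).toLinearMap.toContinuousLinearMap.hasFDerivAt.comp_hasDerivAt t h

theorem HasDerivAt.matrix_inv (h : HasDerivAt A A' t) (hA : IsUnit (A t)) :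
    HasDerivAt (fun s => (A s)⁻¹) (-((A t)⁻¹ * A' * (A t)⁻¹)) t := by
  obtain ⟨u, hu⟩ := hA
  have hinv : Ring.inverse (A t) = ↑u⁻¹ := by rw [← hu, Ring.inverse_unit]
  simp only [nonsing_inv_eq_ringInverse, hinv]
  have hR := hasFDerivAt_ringInverse (𝕜 := 𝕜) u
  rw [hu] at hR
  exact (hR.comp_hasDerivAt t h).congr_deriv (by simp)

theorem HasDerivAt.matrix_inv_of_mul_right (h : HasDerivAt A (A t * V) t) (hA : IsUnit (A t)) :
    HasDerivAt (fun s => (A s)⁻¹) (-(V * (A t)⁻¹)) t := by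
  have hdet := (isUnit_iff_isUnit_det _).mp hA
  simpa only [← mul_assoc, nonsing_inv_mul _ hdet, one_mul] using h.matrix_inv hA

theorem HasDerivAt.mul_matrix_inv_of_mul_right (hA : HasDerivAt A (A t * U) t)
    (hB : HasDerivAt B (B t * V) t) (hBt : IsUnit (B t)) :
    HasDerivAt (fun s => A s * (B s)⁻¹) (A t * (B t)⁻¹ * (B t * (U - V) * (B t)⁻¹)) t := by
  have hdet := (isUnit_iff_isUnit_det _).mp hBt
  refine (hA.mul (hB.matrix_inv_of_mul_right hBt)).congr_deriv ?_
  simp only [mul_assoc, nonsing_inv_mul_cancel_left _ _ hdet, Matrix.mul_sub, Matrix.sub_mul,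
    mul_neg]
  abel

end MatrixCalculus

section Coadjoint

variable {Q D : ℝ → Matrix (Fin n) (Fin n) ℝ} {V D' g W X : Matrix (Fin n) (Fin n) ℝ} {t : ℝ}

theorem coad_sub_left (V W P : Matrix (Fin n) (Fin n) ℝ) :
    coad (V - W) P = coad V P - coad W P := by
  simp only [coad, transpose_sub, Matrix.sub_mul, Matrix.mul_sub]
  abel

theorem coad_sub_right (V P R : Matrix (Fin n) (Fin n) ℝ) :
    coad V (P - R) = coad V P - coad V R := by
  simp only [coad, Matrix.sub_mul, Matrix.mul_sub]
  abel

theorem coad_conj (hg : IsUnit g) :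
    coad (g * W * g⁻¹) (g⁻¹ᵀ * X * gᵀ) = g⁻¹ᵀ * coad W X * gᵀ := by
  have hdet := (isUnit_iff_isUnit_det _).mp hg
  have hdetT := isUnit_det_transpose _ hdet
  simp only [coad, transpose_mul, transpose_nonsing_inv, mul_assoc, Matrix.mul_sub, Matrix.sub_mul,
    mul_nonsing_inv_cancel_left _ _ hdetT]

theorem HasDerivAt.coAd_inv (hQ : HasDerivAt Q (Q t * V) t) (hQt : IsUnit (Q t))
    (hD : HasDerivAt D D' t) :
    HasDerivAt (fun s => (Q s)⁻¹ᵀ * D s * (Q s)ᵀ) ((Q t)⁻¹ᵀ * (D' - coad V (D t)) * (Q t)ᵀ) t := by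
  refine (((hQ.matrix_inv_of_mul_right hQt).matrix_transpose.mul hD).mul
    hQ.matrix_transpose).congr_deriv ?_
  simp only [coad, Pi.mul_apply, transpose_mul, transpose_neg, mul_assoc, Matrix.mul_sub,
    Matrix.sub_mul, Matrix.add_mul, neg_mul]
  abel

end Coadjoint

theorem statement7_general (n : ℕ)
    (Q P V τ Qd Pd Vd τd : ℝ → Matrix (Fin n) (Fin n) ℝ)
    -- Q and Q_d are curves in the matrix Lie group (invertible matrices)
    (hQd : ∀ t, IsUnit (Qd t))
    -- system trajectory: Q̇ = QV, Ṗ = ad*_V P + τ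
    (hQdyn : ∀ t, HasDerivAt Q (Q t * V t) t)
    (hPdyn : ∀ t, HasDerivAt P (coad (V t) (P t) + τ t) t)
    -- desired trajectory: Q̇_d = Q_d V_d, Ṗ_d = ad*_{V_d} P_d + τ_d
    (hQddyn : ∀ t, HasDerivAt Qd (Qd t * Vd t) t)
    (hPddyn : ∀ t, HasDerivAt Pd (coad (Vd t) (Pd t) + τd t) t)
    -- error state E = X X_d⁻¹ = (Q Q_d⁻¹, Ad*_{Q_d⁻¹}(P − P_d))
    (QE PE VE τE : ℝ → Matrix (Fin n) (Fin n) ℝ)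
    (hQE : ∀ t, QE t = Q t * (Qd t)⁻¹)
    (hPE : ∀ t, PE t = ((Qd t)⁻¹)ᵀ * (P t - Pd t) * (Qd t)ᵀ)
    -- error input (V_E, τ_E) = Ad_{X_d}(V − V_d, τ − τ_d)
    (hVE : ∀ t, VE t = Qd t * (V t - Vd t) * (Qd t)⁻¹)
    (hτE : ∀ t, τE t =
      ((Qd t)⁻¹)ᵀ * (coad (V t - Vd t) (Pd t) + (τ t - τd t)) * (Qd t)ᵀ) :
    (∀ t, HasDerivAt QE (QE t * VE t) t) ∧
    (∀ t, HasDerivAt PE (coad (VE t) (PE t) + τE t) t) := by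
  refine ⟨fun t => ?_, fun t => ?_⟩
  · rw [hQE, hVE, funext hQE]
    exact (hQdyn t).mul_matrix_inv_of_mul_right (hQddyn t) (hQd t)
  · have hsplit : coad (V t) (P t) + τ t - (coad (Vd t) (Pd t) + τd t) - coad (Vd t) (P t - Pd t)
        = coad (V t - Vd t) (P t - Pd t) + (coad (V t - Vd t) (Pd t) + (τ t - τd t)) := by
      simp only [coad_sub_left, coad_sub_right]
      abel
    have hPE' := (hQddyn t).coAd_inv (hQd t) ((hPdyn t).sub (hPddyn t))
    simp only [Pi.sub_apply] at hPE'
    rwa [hPE, hVE, hτE, funext hPE, coad_conj (hQd t), ← Matrix.add_mul, ← Matrix.mul_add,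
      ← hsplit]

theorem statement7 (n : ℕ)
    (Q P V τ Qd Pd Vd τd : ℝ → Matrix (Fin n) (Fin n) ℝ)
    -- Q and Q_d are curves in the matrix Lie group (invertible matrices)
    (hQ : ∀ t, IsUnit (Q t)) (hQd : ∀ t, IsUnit (Qd t))
    -- system trajectory: Q̇ = QV, Ṗ = ad*_V P + τ
    (hQdyn : ∀ t, HasDerivAt Q (Q t * V t) t)
    (hPdyn : ∀ t, HasDerivAt P (coad (V t) (P t) + τ t) t)
    -- desired trajectory: Q̇_d = Q_d V_d, Ṗ_d = ad*_{V_d} P_d + τ_d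
    (hQddyn : ∀ t, HasDerivAt Qd (Qd t * Vd t) t)
    (hPddyn : ∀ t, HasDerivAt Pd (coad (Vd t) (Pd t) + τd t) t)
    -- error state E = X X_d⁻¹ = (Q Q_d⁻¹, Ad*_{Q_d⁻¹}(P − P_d))
    (QE PE VE τE : ℝ → Matrix (Fin n) (Fin n) ℝ)
    (hQE : ∀ t, QE t = Q t * (Qd t)⁻¹)
    (hPE : ∀ t, PE t = ((Qd t)⁻¹)ᵀ * (P t - Pd t) * (Qd t)ᵀ)
    -- error input (V_E, τ_E) = Ad_{X_d}(V − V_d, τ − τ_d)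
    (hVE : ∀ t, VE t = Qd t * (V t - Vd t) * (Qd t)⁻¹)
    (hτE : ∀ t, τE t =
      ((Qd t)⁻¹)ᵀ * (coad (V t - Vd t) (Pd t) + (τ t - τd t)) * (Qd t)ᵀ) :
    (∀ t, HasDerivAt QE (QE t * VE t) t) ∧
    (∀ t, HasDerivAt PE (coad (VE t) (PE t) + τE t) t) :=
  statement7_general n Q P V τ Qd Pd Vd τd hQd hQdyn hPdyn hQddyn hPddyn QE PE VE τE hQE hPE hVE hτE
end
end

section
/- Along trajectories of the Lie-Poisson system Q̇ = QV, Ṗ = ad*_V P + τ with V = I_t⁻¹[P] and control τ = Ṡ_t* S_t^{−*}[P] − R[V] − L*_Q dΥ(Q), the Lyapunov function L(Q,P,t) = ½⟨P, I_t⁻¹[P]⟩ + Υ(Q) satisfies L̇ = −R(V, V) ≤ 0. -/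
/-!
STATEMENT 10: Along trajectories of the Lie-Poisson system Q̇ = QV,
Ṗ = ad*_V P + τ with V = I_t⁻¹[P] and control
τ = Ṡ_t* S_t^{−*}[P] − R[V] − L*_Q dΥ(Q), the Lyapunov function
L(Q,P,t) = ½⟨P, I_t⁻¹[P]⟩ + Υ(Q) satisfies L̇ = −R(V,V) ≤ 0.
Setting: G is the group of invertible n×n real matrices, g ≅ g* ≅ n×n
matrices via the trace pairing ⟨P,U⟩ = tr(Pᵀ U); ad*_V P = Vᵀ P − P Vᵀ.
I_t = S_t* ∘ I₀ ∘ S_t with I₀ self-adjoint and positive definite and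
S_t : g → g invertible; S_t* is the dual of S_t (characterised by the
pairing), S_t^{−*} = (S_t*)⁻¹ and Ṡ_t* the time derivative of S_t*.
The constraint V = I_t⁻¹[P] is expressed as I_t[V] = P, under which
½⟨P, I_t⁻¹[P]⟩ = ½⟨P, V⟩.  Υ : g-ambient space → ℝ is smooth and
⟨L*_Q dΥ(Q), U⟩ = ⟨dΥ(Q), QU⟩.  R is a positive-definite symmetric
(0,2)-tensor on g, acting as R[V] ∈ g*, with R(V,W) = ⟨R[V], W⟩.
-/

open Matrix

noncomputable section

attribute [local instance]
  Matrix.linftyOpNormedAddCommGroup Matrix.linftyOpNormedSpace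
  Matrix.linftyOpNormedRing Matrix.linftyOpNormedAlgebra

variable {n : ℕ}

/-- trace pairing between g* and g. -/
def pairg (P U : Matrix (Fin n) (Fin n) ℝ) : ℝ := (Pᵀ * U).trace

/-!
The derivative of the kinetic energy `½⟨P, V⟩` is the power `⟨Ṗ, V⟩` of the momentum equation,
corrected by `-⟨Ṡ* S^{-*} P, V⟩` for the time dependence of the inertia; the control's first
term cancels exactly this correction. Of the remaining terms, `⟨ad*_V P, V⟩ = ⟨P, [V, V]⟩`
vanishes and `-⟨L*_Q dΥ(Q), V⟩` cancels `d/dt Υ(Q) = dΥ(Q)(QV)`, leaving `-R(V, V) ≤ 0`.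
-/

theorem HasDerivAt.linearMap_apply {E F : Type*} [NormedAddCommGroup E] [NormedSpace ℝ E]
    [FiniteDimensional ℝ E] [NormedAddCommGroup F] [NormedSpace ℝ F]
    {f : ℝ → E} {f' : E} {t : ℝ} (L : E →ₗ[ℝ] F) (hf : HasDerivAt f f' t) :
    HasDerivAt (fun s => L (f s)) (L f') t :=
  (LinearMap.toContinuousLinearMap L).hasFDerivAt.comp_hasDerivAt t hf

section TracePairing

variable {f g : ℝ → Matrix (Fin n) (Fin n) ℝ} {f' g' : Matrix (Fin n) (Fin n) ℝ} {t : ℝ}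

theorem pairg_add_left (A B C : Matrix (Fin n) (Fin n) ℝ) :
    pairg (A + B) C = pairg A C + pairg B C := by
  simp [pairg, add_mul]

theorem pairg_sub_left (A B C : Matrix (Fin n) (Fin n) ℝ) :
    pairg (A - B) C = pairg A C - pairg B C := by
  simp [pairg, sub_mul]

theorem pairg_single_left (i j : Fin n) (B : Matrix (Fin n) (Fin n) ℝ) :
    pairg (single i j 1) B = B i j := by
  simp [pairg, Matrix.trace, Matrix.mul_apply, Matrix.single, ite_and]

theorem pairg_coad_self (V P : Matrix (Fin n) (Fin n) ℝ) : pairg (coad V P) V = 0 := by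
  rw [pairg, coad, transpose_sub, sub_mul, trace_sub, transpose_mul, transpose_mul,
    transpose_transpose, Matrix.mul_assoc V, trace_mul_comm V, sub_self]

theorem HasDerivAt.pairg (hf : HasDerivAt f f' t) (hg : HasDerivAt g g' t) :
    HasDerivAt (fun s => pairg (f s) (g s)) (pairg f' (g t) + pairg (f t) g') t := by
  have h := ((hf.linearMap_apply (transposeLinearEquiv (Fin n) (Fin n) ℝ ℝ).toLinearMap).fun_mul
    hg).linearMap_apply (traceLinearMap (Fin n) ℝ ℝ)
  simp only [LinearEquiv.coe_coe, transposeLinearEquiv_apply, traceLinearMap_apply,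
    trace_add] at h
  exact h

-- `hasDerivAt_pi` does not apply: matrices carry the `linftyOp` norm here.
theorem hasDerivAt_of_forall_entry (h : ∀ i j, HasDerivAt (fun s => f s i j) (f' i j) t) :
    HasDerivAt f f' t := by
  have hsum := HasDerivAt.fun_sum fun i (_ : i ∈ Finset.univ) => HasDerivAt.fun_sum
    fun j (_ : j ∈ Finset.univ) => (h i j).linearMap_apply (singleLinearMap ℝ i j)
  simp only [singleLinearMap_apply, ← matrix_eq_sum_single] at hsum
  exact hsum

theorem exists_hasDerivAt_of_hasDerivAt_pairg {D : Matrix (Fin n) (Fin n) ℝ → ℝ}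
    (h : ∀ X, HasDerivAt (fun s => pairg X (f s)) (D X) t) :
    ∃ f', HasDerivAt f f' t ∧ ∀ X, pairg X f' = D X := by
  have hf : HasDerivAt f (Matrix.of fun i j => D (single i j 1)) t :=
    hasDerivAt_of_forall_entry fun i j => by
      simpa only [pairg_single_left, of_apply] using h (single i j 1)
  refine ⟨_, hf, fun X => ?_⟩
  simpa [pairg] using ((hasDerivAt_const t X).pairg hf).unique (h X)

end TracePairing

/- `W = S V` is differentiable because its pairings `⟨X, W⟩ = ⟨S* X, V⟩` are. Differentiating
`⟨P, V⟩ = ⟨I₀ W, W⟩` gives `2⟨I₀ W, Ẇ⟩ = 2(⟨Ṡ* S^{-*} P, V⟩ + ⟨P, V̇⟩)`; comparing with the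
product rule `⟨Ṗ, V⟩ + ⟨P, V̇⟩` eliminates the unknown `⟨P, V̇⟩`. -/
theorem hasDerivAt_half_pairg_momentum_velocity
    {S Sdual Sdual' : ℝ → Matrix (Fin n) (Fin n) ℝ →ₗ[ℝ] Matrix (Fin n) (Fin n) ℝ}
    {I₀ : Matrix (Fin n) (Fin n) ℝ →ₗ[ℝ] Matrix (Fin n) (Fin n) ℝ}
    {P V : ℝ → Matrix (Fin n) (Fin n) ℝ} {P' V' : Matrix (Fin n) (Fin n) ℝ} {t : ℝ}
    (hSdual : ∀ s P' X, pairg (Sdual s P') X = pairg P' (S s X))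
    (hSdual' : ∀ X, HasDerivAt (fun s => Sdual s X) (Sdual' t X) t)
    (hI₀sym : ∀ X Y, pairg (I₀ X) Y = pairg (I₀ Y) X)
    (hV : ∀ s, Sdual s (I₀ (S s (V s))) = P s)
    (hP : HasDerivAt P P' t) (hVd : HasDerivAt V V' t) :
    HasDerivAt (fun s => (1 / 2 : ℝ) * pairg (P s) (V s))
      (pairg P' (V t) - pairg (Sdual' t (I₀ (S t (V t)))) (V t)) t := by
  obtain ⟨W', hW, hW'⟩ := exists_hasDerivAt_of_hasDerivAt_pairg
    (f := fun s => S s (V s)) (D := fun X => pairg (Sdual' t X) (V t) + pairg (Sdual t X) V')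
    fun X => by simpa only [hSdual] using (hSdual' X).pairg hVd
  have hEnergy : ∀ s, pairg (P s) (V s) = pairg (I₀ (S s (V s))) (S s (V s)) := fun s => by
    rw [← hV s, hSdual]
  have hDouble : HasDerivAt (fun s => pairg (P s) (V s))
      (2 * (pairg (Sdual' t (I₀ (S t (V t)))) (V t) + pairg (P t) V')) t := by
    have h := (hW.linearMap_apply I₀).pairg hW
    rw [hI₀sym W', hW', hV t] at h
    simp only [hEnergy]
    convert h using 1
    ring
  have hProduct := hP.pairg hVd
  have hUnique := hDouble.unique hProduct
  exact (hProduct.const_mul (1 / 2 : ℝ)).congr_deriv (by linarith)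

theorem statement10_general (n : ℕ)
    (Q P V : ℝ → Matrix (Fin n) (Fin n) ℝ)
    -- the inertia: I_t = S_t* ∘ I₀ ∘ S_t, with S_t invertible
    (S Sdual Sdual' SdualInv : ℝ → Matrix (Fin n) (Fin n) ℝ →ₗ[ℝ] Matrix (Fin n) (Fin n) ℝ)
    (I₀ : Matrix (Fin n) (Fin n) ℝ →ₗ[ℝ] Matrix (Fin n) (Fin n) ℝ)
    -- Sdual t is the dual map S_t* w.r.t. the trace pairing
    (hSdual : ∀ t P' X, pairg (Sdual t P') X = pairg P' (S t X))
    -- SdualInv t = (S_t*)⁻¹ = S_t^{−*}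
    (hSdualInv : ∀ t P', Sdual t (SdualInv t P') = P' ∧ SdualInv t (Sdual t P') = P')
    -- Sdual' t = Ṡ_t*, the time derivative of S_t*
    (hSdual' : ∀ t X, HasDerivAt (fun s => Sdual s X) (Sdual' t X) t)
    -- I₀ self-adjoint and positive definite
    (hI₀sym : ∀ X Y, pairg (I₀ X) Y = pairg (I₀ Y) X)
    -- velocity constraint V = I_t⁻¹[P], i.e. I_t[V] = P, V smooth
    (hV : ∀ t, Sdual t (I₀ (S t (V t))) = P t)
    (hVdiff : Differentiable ℝ V)
    -- navigation-type potential Υ and its left-trivialised differential DU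
    (Υ : Matrix (Fin n) (Fin n) ℝ → ℝ) (hΥ : Differentiable ℝ Υ)
    (DU : ℝ → Matrix (Fin n) (Fin n) ℝ)
    (hDU : ∀ t X, pairg (DU t) X = fderiv ℝ Υ (Q t) (Q t * X))
    -- Rayleigh dissipation: positive-definite symmetric (0,2) tensor
    (Rb : Matrix (Fin n) (Fin n) ℝ →ₗ[ℝ] Matrix (Fin n) (Fin n) ℝ)
    (hRpos : ∀ X, X ≠ 0 → 0 < pairg (Rb X) X)
    -- closed-loop dynamics: Q̇ = QV, Ṗ = ad*_V P + τ with
    -- τ = Ṡ_t* S_t^{−*}[P] − R[V] − L*_Q dΥ(Q)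
    (hQdyn : ∀ t, HasDerivAt Q (Q t * V t) t)
    (hPdyn : ∀ t, HasDerivAt P
      (coad (V t) (P t) +
        (Sdual' t (SdualInv t (P t)) - Rb (V t) - DU t)) t) :
    ∀ t, HasDerivAt (fun s => (1 / 2 : ℝ) * pairg (P s) (V s) + Υ (Q s))
        (-(pairg (Rb (V t)) (V t))) t ∧
      -(pairg (Rb (V t)) (V t)) ≤ 0 := by
  intro t
  have hPower : pairg (coad (V t) (P t) + (Sdual' t (SdualInv t (P t)) - Rb (V t) - DU t)) (V t)
      - pairg (Sdual' t (SdualInv t (P t))) (V t)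
      = -pairg (Rb (V t)) (V t) - pairg (DU t) (V t) := by
    simp only [pairg_add_left, pairg_sub_left, pairg_coad_self]
    ring
  have hKinetic := hasDerivAt_half_pairg_momentum_velocity hSdual (hSdual' t) hI₀sym hV
    (hPdyn t) (hVdiff t).hasDerivAt
  have hMomentum : I₀ (S t (V t)) = SdualInv t (P t) := by rw [← hV t, (hSdualInv t _).2]
  rw [hMomentum, hPower] at hKinetic
  have hPotential : HasDerivAt (fun s => Υ (Q s)) (pairg (DU t) (V t)) t := by
    rw [hDU]
    exact (hΥ (Q t)).hasFDerivAt.comp_hasDerivAt t (hQdyn t)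
  refine ⟨(hKinetic.fun_add hPotential).congr_deriv (by ring), neg_nonpos.mpr ?_⟩
  rcases eq_or_ne (V t) 0 with hV0 | hV0
  · simp [hV0, pairg]
  · exact (hRpos _ hV0).le

theorem statement10 (n : ℕ)
    (Q P V : ℝ → Matrix (Fin n) (Fin n) ℝ)
    (hQunit : ∀ t, IsUnit (Q t))
    -- the inertia: I_t = S_t* ∘ I₀ ∘ S_t, with S_t invertible
    (S Sdual Sdual' SdualInv : ℝ → Matrix (Fin n) (Fin n) ℝ →ₗ[ℝ] Matrix (Fin n) (Fin n) ℝ)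
    (I₀ : Matrix (Fin n) (Fin n) ℝ →ₗ[ℝ] Matrix (Fin n) (Fin n) ℝ)
    (hS0 : S 0 = LinearMap.id)
    (hSbij : ∀ t, Function.Bijective (S t))
    -- Sdual t is the dual map S_t* w.r.t. the trace pairing
    (hSdual : ∀ t P' X, pairg (Sdual t P') X = pairg P' (S t X))
    -- SdualInv t = (S_t*)⁻¹ = S_t^{−*}
    (hSdualInv : ∀ t P', Sdual t (SdualInv t P') = P' ∧ SdualInv t (Sdual t P') = P')
    -- Sdual' t = Ṡ_t*, the time derivative of S_t*
    (hSdual' : ∀ t X, HasDerivAt (fun s => Sdual s X) (Sdual' t X) t)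
    -- I₀ self-adjoint and positive definite
    (hI₀sym : ∀ X Y, pairg (I₀ X) Y = pairg (I₀ Y) X)
    (hI₀pos : ∀ X, X ≠ 0 → 0 < pairg (I₀ X) X)
    -- velocity constraint V = I_t⁻¹[P], i.e. I_t[V] = P, V smooth
    (hV : ∀ t, Sdual t (I₀ (S t (V t))) = P t)
    (hVdiff : Differentiable ℝ V)
    -- navigation-type potential Υ and its left-trivialised differential DU
    (Υ : Matrix (Fin n) (Fin n) ℝ → ℝ) (hΥ : Differentiable ℝ Υ)
    (DU : ℝ → Matrix (Fin n) (Fin n) ℝ)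
    (hDU : ∀ t X, pairg (DU t) X = fderiv ℝ Υ (Q t) (Q t * X))
    -- Rayleigh dissipation: positive-definite symmetric (0,2) tensor
    (Rb : Matrix (Fin n) (Fin n) ℝ →ₗ[ℝ] Matrix (Fin n) (Fin n) ℝ)
    (hRsym : ∀ X Y, pairg (Rb X) Y = pairg (Rb Y) X)
    (hRpos : ∀ X, X ≠ 0 → 0 < pairg (Rb X) X)
    -- closed-loop dynamics: Q̇ = QV, Ṗ = ad*_V P + τ with
    -- τ = Ṡ_t* S_t^{−*}[P] − R[V] − L*_Q dΥ(Q)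
    (hQdyn : ∀ t, HasDerivAt Q (Q t * V t) t)
    (hPdyn : ∀ t, HasDerivAt P
      (coad (V t) (P t) +
        (Sdual' t (SdualInv t (P t)) - Rb (V t) - DU t)) t) :
    ∀ t, HasDerivAt (fun s => (1 / 2 : ℝ) * pairg (P s) (V s) + Υ (Q s))
        (-(pairg (Rb (V t)) (V t))) t ∧
      -(pairg (Rb (V t)) (V t)) ≤ 0 :=
  statement10_general n Q P V S Sdual Sdual' SdualInv I₀ hSdual hSdualInv hSdual' hI₀sym hV hVdiff Υ
    hΥ DU hDU Rb hRpos hQdyn hPdyn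
end
end
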